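/- In the Round-Robin algorithm, if the agent with the highest priority (agent 1) reports her true additive valuation, then regardless of the other agents' bids, agent 1 does not envy any other agent's bundle in the resulting allocation. -/

import Mathlib

open Finset

/-- Pick the available good with the highest bid, ties broken lexicographically
(i.e. in favor of the smaller index). -/
noncomputable def rrPick {m : ℕ} (bid : Fin m → ℝ) (S : Finset (Fin m)) : Option (Fin m) :=
  if h : S.Nonempty then
    some (S.exists_max_image (fun g => toLex (bid g, OrderDual.toDual g)) h).choose
  else none

/-- The state of Round-Robin (available goods, partial allocation) after `t` picks:
at step `t` the active agent is `t % n` and she picks her highest-bid available good. -/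
noncomputable def rrState (n : ℕ) [NeZero n] {m : ℕ} (b : Fin n → Fin m → ℝ) :
    ℕ → Finset (Fin m) × (Fin n → Finset (Fin m))
  | 0 => (Finset.univ, fun _ => ∅)
  | (t + 1) =>
    let p := rrState n b t
    let i : Fin n := ⟨t % n, Nat.mod_lt t (Nat.pos_of_ne_zero (NeZero.ne n))⟩
    match rrPick (b i) p.1 with
    | none => p
    | some g => (p.1.erase g, Function.update p.2 i (insert g (p.2 i)))

/-- The allocation output by the Round-Robin mechanism on bid profile `b`. -/
noncomputable def roundRobin (n : ℕ) [NeZero n] {m : ℕ} (b : Fin n → Fin m → ℝ) :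
    Fin n → Finset (Fin m) :=
  (rrState n b m).2

/-!
Agent `0` picks at the steps `k * n` and agent `j` at the steps `k * n + j`. Since the set of
available goods only shrinks and a truthful agent `0` takes the `v₁`-best available good, her
pick in round `k` is worth at least agent `j`'s pick in round `k`, or at least `0` if agent `j`
gets nothing in that round. Summing over the rounds gives the claim.
-/

section Pick

variable {m : ℕ} {bid : Fin m → ℝ} {S : Finset (Fin m)} {g : Fin m}

lemma rrPick_eq_none_iff : rrPick bid S = none ↔ S = ∅ := by
  by_cases hS : S.Nonempty
  · simp [rrPick, hS, hS.ne_empty]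
  · simp [rrPick, not_nonempty_iff_eq_empty.mp hS]

lemma rrPick_spec (h : rrPick bid S = some g) : g ∈ S ∧ ∀ g' ∈ S, bid g' ≤ bid g := by
  by_cases hS : S.Nonempty
  · simp only [rrPick, dif_pos hS, Option.some.injEq] at h
    obtain ⟨hmem, hmax⟩ :=
      (S.exists_max_image (fun g => toLex (bid g, OrderDual.toDual g)) hS).choose_spec
    rw [h] at hmem hmax
    refine ⟨hmem, fun g' hg' => ?_⟩
    rcases Prod.Lex.le_iff.mp (hmax g' hg') with hlt | ⟨heq, -⟩
    · exact hlt.le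
    · exact heq.le
  · simp [rrPick, hS] at h

lemma rrPick_mem (h : rrPick bid S = some g) : g ∈ S := (rrPick_spec h).1

lemma le_of_rrPick_eq_some (h : rrPick bid S = some g) {g' : Fin m} (hg' : g' ∈ S) :
    bid g' ≤ bid g :=
  (rrPick_spec h).2 g' hg'

end Pick

namespace RoundRobin

variable {n : ℕ} [NeZero n] {m : ℕ} {b : Fin n → Fin m → ℝ}

variable (n) in
def agentAt (t : ℕ) : Fin n := ⟨t % n, Nat.mod_lt t (Nat.pos_of_ne_zero (NeZero.ne n))⟩

lemma agentAt_mul_add (k : ℕ) (j : Fin n) : agentAt n (k * n + j) = j := by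
  ext
  simp [agentAt, Nat.add_mod, Nat.mod_eq_of_lt j.isLt]

variable (b) in
noncomputable def pickAt (t : ℕ) : Option (Fin m) :=
  rrPick (b (agentAt n t)) (rrState n b t).1

lemma rrState_succ_of_pickAt_eq_none {t : ℕ} (h : pickAt b t = none) :
    rrState n b (t + 1) = rrState n b t := by
  unfold pickAt agentAt at h
  simp only [rrState, h]

lemma rrState_succ_of_pickAt_eq_some {t : ℕ} {g : Fin m} (h : pickAt b t = some g) :
    rrState n b (t + 1) =
      ((rrState n b t).1.erase g,
        Function.update (rrState n b t).2 (agentAt n t)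
          (insert g ((rrState n b t).2 (agentAt n t)))) := by
  unfold pickAt agentAt at h
  simp only [rrState, h]
  rfl

lemma pickAt_eq_none_iff {t : ℕ} : pickAt b t = none ↔ (rrState n b t).1 = ∅ :=
  rrPick_eq_none_iff

lemma available_succ_subset (t : ℕ) : (rrState n b (t + 1)).1 ⊆ (rrState n b t).1 := by
  rcases h : pickAt b t with _ | g
  · rw [rrState_succ_of_pickAt_eq_none h]
  · rw [rrState_succ_of_pickAt_eq_some h]
    exact erase_subset _ _

lemma available_antitone : Antitone fun t => (rrState n b t).1 :=
  antitone_nat_of_succ_le available_succ_subset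

lemma card_available_le (t : ℕ) : #(rrState n b t).1 ≤ m - t := by
  induction t with
  | zero => simp [rrState]
  | succ t ih =>
    rcases h : pickAt b t with _ | g
    · simp [rrState_succ_of_pickAt_eq_none h, pickAt_eq_none_iff.mp h]
    · rw [rrState_succ_of_pickAt_eq_some h, card_erase_of_mem (rrPick_mem h)]
      omega

lemma rrState_eq_of_le {t : ℕ} (ht : m ≤ t) : rrState n b t = rrState n b m := by
  induction t, ht using Nat.le_induction with
  | base => rfl
  | succ t ht ih =>
    have hempty : (rrState n b t).1 = ∅ := by
      simpa [ht] using card_available_le (b := b) t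
    rw [rrState_succ_of_pickAt_eq_none (pickAt_eq_none_iff.mpr hempty), ih]

lemma notMem_available_of_mem_bundle {t : ℕ} {i : Fin n} {g : Fin m}
    (hg : g ∈ (rrState n b t).2 i) : g ∉ (rrState n b t).1 := by
  induction t with
  | zero => simp [rrState] at hg
  | succ t ih =>
    rcases h : pickAt b t with _ | g'
    · rw [rrState_succ_of_pickAt_eq_none h] at hg ⊢
      exact ih hg
    · rw [rrState_succ_of_pickAt_eq_some h] at hg ⊢
      rw [mem_erase, not_and_or, not_ne_iff]
      rcases eq_or_ne i (agentAt n t) with rfl | hi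
      · rcases mem_insert.mp (by simpa using hg) with rfl | hg
        · exact Or.inl rfl
        · exact Or.inr (ih hg)
      · exact Or.inr (ih (by simpa [hi] using hg))

lemma sum_bundle_eq {M : Type*} [AddCommMonoid M] (v : Fin m → M) (T : ℕ) (i : Fin n) :
    ∑ g ∈ (rrState n b T).2 i, v g =
      ∑ t ∈ {t ∈ range T | agentAt n t = i}, ∑ g ∈ (pickAt b t).toFinset, v g := by
  induction T with
  | zero => simp [rrState]
  | succ T ih =>
    rw [range_add_one, filter_insert]
    rcases h : pickAt b T with _ | g
    · rw [rrState_succ_of_pickAt_eq_none h, ih]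
      split_ifs <;> simp [h]
    · rw [rrState_succ_of_pickAt_eq_some h]
      rcases eq_or_ne (agentAt n T) i with rfl | hi
      · have hg : g ∉ (rrState n b T).2 (agentAt n T) :=
          fun hg => notMem_available_of_mem_bundle hg (rrPick_mem h)
        rw [if_pos rfl, sum_insert (by simp), ← ih]
        simp [sum_insert hg, h]
      · simp [Function.update_of_ne hi.symm, hi, ih]

lemma sum_pickAt_le_of_le {v : Fin m → ℝ} (hv : ∀ g, 0 ≤ v g) {s t : ℕ} (hst : s ≤ t)
    (hs : b (agentAt n s) = v) :
    ∑ g ∈ (pickAt b t).toFinset, v g ≤ ∑ g ∈ (pickAt b s).toFinset, v g := by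
  rcases ht : pickAt b t with _ | g
  · simpa using sum_nonneg fun g _ => hv g
  · have hgs : g ∈ (rrState n b s).1 := available_antitone hst (rrPick_mem ht)
    obtain ⟨g₀, hs₀⟩ : ∃ g₀, pickAt b s = some g₀ :=
      Option.ne_none_iff_exists'.mp fun h => by simp [pickAt_eq_none_iff.mp h] at hgs
    have hle := le_of_rrPick_eq_some hs₀ hgs
    rw [hs] at hle
    simpa [hs₀] using hle

lemma sum_filter_agentAt_range_mul {M : Type*} [AddCommMonoid M] (f : ℕ → M) (r : ℕ)
    (j : Fin n) :
    ∑ t ∈ {t ∈ range (r * n) | agentAt n t = j}, f t = ∑ k ∈ range r, f (k * n + j) := by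
  symm
  apply sum_nbij' (fun k => k * n + j) (fun t => t / n)
  · intro k hk
    have : (k + 1) * n ≤ r * n := Nat.mul_le_mul_right n (mem_range.mp hk)
    simp only [mem_filter, mem_range, agentAt_mul_add, and_true]
    nlinarith [j.isLt]
  · intro t ht
    simp only [mem_filter, mem_range] at ht
    exact mem_range.mpr (Nat.div_lt_of_lt_mul (by rw [mul_comm]; exact ht.1))
  · intro k _
    rw [add_comm, Nat.add_mul_div_right _ _ (Nat.pos_of_ne_zero (NeZero.ne n)),
      Nat.div_eq_of_lt j.isLt, zero_add]
  · intro t ht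
    simp only [mem_filter, mem_range] at ht
    simp [← ht.2, agentAt, Nat.div_add_mod']
  · intro _ _
    rfl

end RoundRobin

open RoundRobin

/-- if the first agent bids truthfully in Round-Robin, then regardless of the
other agents' bids she does not envy any other agent's bundle. -/
theorem roundRobin_truthful_first_agent_no_envy {n m : ℕ} [NeZero n]
    (v₁ : Fin m → ℝ) (hv₁ : ∀ g, 0 ≤ v₁ g)
    (b : Fin n → Fin m → ℝ) (htruth : b 0 = v₁) :
    ∀ j : Fin n, ∑ g ∈ roundRobin n b j, v₁ g ≤ ∑ g ∈ roundRobin n b 0, v₁ g := by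
  intro j
  have hfinal : roundRobin n b = (rrState n b (m * n)).2 := by
    rw [roundRobin,
      rrState_eq_of_le (Nat.le_mul_of_pos_right m (Nat.pos_of_ne_zero (NeZero.ne n)))]
  simp only [hfinal, sum_bundle_eq, sum_filter_agentAt_range_mul]
  refine sum_le_sum fun k _ => ?_
  exact sum_pickAt_le_of_le hv₁ (by simp) (by rw [agentAt_mul_add, htruth])
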